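/- For natural numbers K_1, K_j, P with K_1 + K_j ≤ P, the key-sharing probability satisfies the two-sided bound K_1 K_j/P · (1 - K_1 K_j / P) ≤ 1 - C(P-K_1, K_j)/C(P, K_j) ≤ K_1 K_j/(P - K_1). -/

import Mathlib

/-!
Write `P = m + K₁` and `k = K_j`. The ratio `C(m, k) / C(m + K₁, k)` equals the ratio of falling
factorials `∏_{i<k} (m - i) / (m + K₁ - i)`. Every factor is at most `m / (m + K₁) = 1 - a` with
`a = K₁ / P`, so the ratio is at most `(1 - a)^k`; and `(1 - a)^k (1 + ka) ≤ (1 - a²)^k ≤ 1` gives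
`(1 - a)^k ≤ 1 / (1 + ka) ≤ 1 - ka + (ka)²`, which is the lower bound.
Conversely, an induction on `k` shows `(m - K₁ k) · (m + K₁)^{(k)} ≤ m · m^{(k)}`, i.e. the ratio is
at least `1 - K₁ k / m`, which is the upper bound.
-/

theorem Nat.descFactorial_mul_add_pow_le (m b k : ℕ) :
    m.descFactorial k * (m + b) ^ k ≤ (m + b).descFactorial k * m ^ k := by
  induction k with
  | zero => simp
  | succ k ih =>
    have factor : (m - k) * (m + b) ≤ (m + b - k) * m := by
      rcases le_total k m with hk | hk
      · zify [hk, hk.trans (Nat.le_add_right m b)]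
        nlinarith
      · simp [Nat.sub_eq_zero_of_le hk]
    rw [Nat.descFactorial_succ, Nat.descFactorial_succ, pow_succ, pow_succ]
    calc (m - k) * m.descFactorial k * ((m + b) ^ k * (m + b))
        = ((m - k) * (m + b)) * (m.descFactorial k * (m + b) ^ k) := by ring
      _ ≤ ((m + b - k) * m) * ((m + b).descFactorial k * m ^ k) := Nat.mul_le_mul factor ih
      _ = (m + b - k) * (m + b).descFactorial k * (m ^ k * m) := by ring

theorem sub_mul_descFactorial_add_le_mul_descFactorial (m b k : ℕ) (hk : k ≤ m) :
    ((m : ℝ) - b * k) * (m + b).descFactorial k ≤ m * m.descFactorial k := by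
  induction k with
  | zero => simp
  | succ k ih =>
    have hkm : k ≤ m := by omega
    have factor : ((m : ℝ) - b * (k + 1)) * (m + b - k) ≤ (m - b * k) * (m - k) := by
      rcases b.eq_zero_or_pos with rfl | hb
      · simp
      · have hb1 : (1 : ℝ) ≤ b := by exact_mod_cast hb
        have hgap : ((m : ℝ) - b * k) * (m - k) - (m - b * (k + 1)) * (m + b - k)
            = b * k * (b - 1) + b ^ 2 := by ring
        linarith [sq_nonneg (b : ℝ), mul_nonneg (mul_nonneg (by linarith : (0 : ℝ) ≤ b)
          (Nat.cast_nonneg k)) (by linarith : (0 : ℝ) ≤ b - 1)]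
    have hmk : (0 : ℝ) ≤ m - k := by
      rw [sub_nonneg]
      exact_mod_cast hkm
    have hD : (0 : ℝ) ≤ (m + b).descFactorial k := Nat.cast_nonneg _
    rw [Nat.descFactorial_succ, Nat.descFactorial_succ]
    push_cast [Nat.cast_sub hkm, Nat.cast_sub (hkm.trans (Nat.le_add_right m b))]
    calc ((m : ℝ) - b * (k + 1)) * ((m + b - k) * (m + b).descFactorial k)
        = (((m : ℝ) - b * (k + 1)) * (m + b - k)) * (m + b).descFactorial k := by ring
      _ ≤ ((m - b * k) * (m - k)) * (m + b).descFactorial k := by gcongr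
      _ = (m - k) * ((m - b * k) * (m + b).descFactorial k) := by ring
      _ ≤ (m - k) * (m * m.descFactorial k) := mul_le_mul_of_nonneg_left (ih hkm) hmk
      _ = m * ((m - k) * m.descFactorial k) := by ring

theorem one_sub_pow_le_one_sub_mul_add_sq {a : ℝ} (ha₀ : 0 ≤ a) (ha₁ : a ≤ 1) (k : ℕ) :
    (1 - a) ^ k ≤ 1 - k * a + (k * a) ^ 2 := by
  have hpow : (1 - a) ^ k * (1 + k * a) ≤ 1 :=
    calc (1 - a) ^ k * (1 + k * a) ≤ (1 - a) ^ k * (1 + a) ^ k :=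
          mul_le_mul_of_nonneg_left (one_add_mul_le_pow (by linarith) k)
            (pow_nonneg (by linarith) k)
      _ = (1 - a ^ 2) ^ k := by rw [← mul_pow]; ring
      _ ≤ 1 := pow_le_one₀ (by nlinarith) (by nlinarith)
  have hka : (0 : ℝ) ≤ k * a := by positivity
  refine le_of_mul_le_mul_right ?_ (by linarith : (0 : ℝ) < 1 + k * a)
  calc (1 - a) ^ k * (1 + k * a) ≤ 1 := hpow
    _ ≤ 1 + (k * a) ^ 3 := by nlinarith [pow_nonneg hka 3]
    _ = (1 - k * a + (k * a) ^ 2) * (1 + k * a) := by ring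

theorem Nat.cast_choose_div_cast_choose {K : Type*} [Field K] [CharZero K] (n m k : ℕ) :
    (n.choose k : K) / m.choose k = n.descFactorial k / m.descFactorial k := by
  rw [Nat.descFactorial_eq_factorial_mul_choose, Nat.descFactorial_eq_factorial_mul_choose]
  push_cast
  rw [mul_div_mul_left]
  exact_mod_cast (Nat.factorial_pos k).ne'

theorem mul_one_sub_le_one_sub_descFactorial_div (m b k : ℕ) (hk : k ≤ m + b) (hmb : 0 < m + b) :
    (b * k / (m + b) : ℝ) * (1 - b * k / (m + b))
      ≤ 1 - (m.descFactorial k : ℝ) / (m + b).descFactorial k := by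
  have hmb' : (0 : ℝ) < m + b := by exact_mod_cast hmb
  have hD : (0 : ℝ) < (m + b).descFactorial k := by exact_mod_cast Nat.descFactorial_pos.mpr hk
  set a : ℝ := b / (m + b) with ha
  have ha₀ : 0 ≤ a := by positivity
  have ha₁ : a ≤ 1 := by rw [ha, div_le_one hmb']; linarith [(Nat.cast_nonneg m : (0 : ℝ) ≤ m)]
  have hratio : (m.descFactorial k : ℝ) / (m + b).descFactorial k ≤ (1 - a) ^ k := by
    have hpow := Nat.descFactorial_mul_add_pow_le m b k
    rw [show 1 - a = m / (m + b) by rw [ha]; field_simp; ring, div_pow,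
      div_le_div_iff₀ hD (by positivity), mul_comm ((m : ℝ) ^ k)]
    exact_mod_cast hpow
  have hka : (b * k / (m + b) : ℝ) = k * a := by ring
  rw [hka]
  nlinarith [one_sub_pow_le_one_sub_mul_add_sq ha₀ ha₁ k]

theorem one_sub_descFactorial_div_le (m b k : ℕ) (hk : k ≤ m) (hm : 0 < m) :
    1 - (m.descFactorial k : ℝ) / (m + b).descFactorial k ≤ b * k / m := by
  have hm' : (0 : ℝ) < m := by exact_mod_cast hm
  have hD : (0 : ℝ) < (m + b).descFactorial k :=
    by exact_mod_cast Nat.descFactorial_pos.mpr (hk.trans (Nat.le_add_right m b))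
  rw [sub_le_comm, le_div_iff₀ hD]
  calc (1 - b * k / m : ℝ) * (m + b).descFactorial k
      = ((m - b * k) * (m + b).descFactorial k) / m := by field_simp
    _ ≤ (m * m.descFactorial k) / m :=
        div_le_div_of_nonneg_right (sub_mul_descFactorial_add_le_mul_descFactorial m b k hk) hm'.le
    _ = m.descFactorial k := by field_simp

theorem stmt14_general (K1 Kj P : ℕ) (h : K1 + Kj ≤ P) :
    ((K1 : ℝ) * Kj / P) * (1 - (K1 : ℝ) * Kj / P)
        ≤ 1 - ((P - K1).choose Kj : ℝ) / (P.choose Kj : ℝ) ∧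
      1 - ((P - K1).choose Kj : ℝ) / (P.choose Kj : ℝ)
        ≤ (K1 : ℝ) * Kj / ((P : ℝ) - (K1 : ℝ)) := by
  obtain ⟨m, rfl⟩ := Nat.exists_eq_add_of_le' ((Nat.le_add_right K1 Kj).trans h)
  rcases Kj.eq_zero_or_pos with rfl | hKj
  · simp
  have hKjm : Kj ≤ m := by omega
  rw [Nat.add_sub_cancel, Nat.cast_choose_div_cast_choose]
  push_cast
  refine ⟨mul_one_sub_le_one_sub_descFactorial_div m K1 Kj (by omega) (by omega), ?_⟩
  simpa using one_sub_descFactorial_div_le m K1 Kj hKjm (by omega)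

/-- For naturals `K1, Kj, P` with `K1 + Kj ≤ P` (and `K1 * Kj ≤ P` so the
lower bound is nonnegative), the key-sharing probability satisfies
`(K1 Kj / P)(1 - K1 Kj / P) ≤ 1 - C(P-K1, Kj)/C(P, Kj) ≤ K1 Kj/(P - K1)`. -/
theorem stmt14 (K1 Kj P : ℕ) (h : K1 + Kj ≤ P) (h2 : K1 * Kj ≤ P) (hP : 0 < P) :
    ((K1 : ℝ) * Kj / P) * (1 - (K1 : ℝ) * Kj / P)
        ≤ 1 - ((P - K1).choose Kj : ℝ) / (P.choose Kj : ℝ) ∧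
      1 - ((P - K1).choose Kj : ℝ) / (P.choose Kj : ℝ)
        ≤ (K1 : ℝ) * Kj / ((P : ℝ) - (K1 : ℝ)) :=
  stmt14_general K1 Kj P h
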